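/- arXiv:1912.04683 — 3 statements merged into one kernel-verified Lean document; each statement's English description precedes it below -/
import Mathlib

section
/- Fix an integer k ≥ 2 and 0 < δ < 1/(2k). For every ε > 0 there is a constant C (depending only on k, δ, ε) such that for all positive integers q and all complex s with Re(s) ≥ −1 + δ, the function F*(s) = ∏_{p | q} (1 + (q,p^k)^s / p^{k(1+s)}) / (1 + 1/p^{k(1+s)}) · ∏_p (1 − 2 / (p^k (1 + (q,p^k)^s / p^{k(1+s)}))) is well defined (all the relevant products converge, no denominator vanishes) and satisfies |F*(s)| ≤ C q^ε. -/
open Complex ArithmeticFunction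

/-- The function `F*(s)` from the paper. -/
noncomputable def Fstar (k q : ℕ) (s : ℂ) : ℂ :=
  (∏ p ∈ q.primeFactors,
      (1 + (Nat.gcd q (p ^ k) : ℂ) ^ s / (p : ℂ) ^ ((k : ℂ) * (1 + s))) /
        (1 + 1 / (p : ℂ) ^ ((k : ℂ) * (1 + s)))) *
    ∏' p : Nat.Primes,
      (1 - 2 / (((p : ℕ) : ℂ) ^ k *
        (1 + (Nat.gcd q ((p : ℕ) ^ k) : ℂ) ^ s / ((p : ℕ) : ℂ) ^ ((k : ℂ) * (1 + s)))))

/-!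
For `Re s ≥ -1 + δ` and `g ∣ p ^ k`, the quantity `w = g ^ s / p ^ (k (1 + s))` has modulus at most
`p ^ (-k δ) ≤ 2 ^ (-k δ) =: r < 1`, so every `1 + w` has modulus between `1 - r` and `1 + r`.
Each factor of the finite product is therefore bounded by `M = (1 + r) / (1 - r)`, and
`M ^ ω(q) ≤ M ^ P q ^ ε` with `P = ⌈M ^ (1 / ε)⌉`, since every prime `p ≥ P` satisfies `M ≤ p ^ ε`.
The factors of the Euler product differ from `1` by at most `2 / ((1 - r) p ^ 2)`, which makes
the product converge and bounds it by `exp (∑ 2 / ((1 - r) p ^ 2))`, uniformly in `q` and `s`.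
-/

section NormedRing

variable {ι R : Type*} [NormedCommRing R] [NormOneClass R] [CompleteSpace R] {F : ι → R}

lemma multipliable_of_summable_norm_sub_one (hF : Summable fun i ↦ ‖F i - 1‖) :
    Multipliable F := by
  simpa using multipliable_one_add_of_summable hF

lemma norm_tprod_le_exp_tsum_norm_sub_one (hF : Summable fun i ↦ ‖F i - 1‖) :
    ‖∏' i, F i‖ ≤ Real.exp (∑' i, ‖F i - 1‖) := by
  refine le_of_tendsto' (Filter.Tendsto.norm (multipliable_of_summable_norm_sub_one hF).hasProd)
    fun t ↦ ?_
  have hprod := t.norm_prod_one_add_sub_one_le fun i ↦ F i - 1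
  simp only [add_sub_cancel] at hprod
  calc ‖∏ i ∈ t, F i‖ ≤ ‖∏ i ∈ t, F i - 1‖ + ‖(1 : R)‖ := norm_le_norm_sub_add _ _
    _ ≤ Real.exp (∑ i ∈ t, ‖F i - 1‖) := by rw [norm_one]; linarith
    _ ≤ Real.exp (∑' i, ‖F i - 1‖) :=
      Real.exp_le_exp.mpr (hF.sum_le_tsum t fun _ _ ↦ norm_nonneg _)

end NormedRing

section NumberTheory

open Finset in
lemma pow_card_primeFactors_le {M ε : ℝ} (hM : 1 ≤ M) (hε : 0 < ε) {q : ℕ} (hq : q ≠ 0) :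
    M ^ #q.primeFactors ≤ M ^ ⌈M ^ (1 / ε)⌉₊ * (q : ℝ) ^ ε := by
  set P := ⌈M ^ (1 / ε)⌉₊
  have hfactor : ∀ p ∈ q.primeFactors, M ≤ (if p < P then M else 1) * (p : ℝ) ^ ε := by
    intro p hp
    have hp1 : (1 : ℝ) ≤ p := by exact_mod_cast (Nat.prime_of_mem_primeFactors hp).one_le
    split_ifs with hpP
    · exact le_mul_of_one_le_right (by linarith) (Real.one_le_rpow hp1 hε.le)
    · calc M = (M ^ (1 / ε)) ^ ε := by
            rw [← Real.rpow_mul (by linarith), one_div_mul_cancel hε.ne', Real.rpow_one]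
        _ ≤ (p : ℝ) ^ ε := by
            gcongr
            exact (Nat.le_ceil _).trans (by exact_mod_cast not_lt.mp hpP)
        _ = _ := (one_mul _).symm
  have hcard : #(q.primeFactors.filter (· < P)) ≤ P :=
    (card_le_card fun p hp ↦ mem_range.mpr (mem_filter.mp hp).2).trans (card_range P).le
  have hprod : (∏ p ∈ q.primeFactors, (p : ℝ)) ≤ q := by
    rw [← Nat.cast_prod]
    exact_mod_cast Nat.le_of_dvd (Nat.pos_of_ne_zero hq) (Nat.prod_primeFactors_dvd q)
  calc M ^ #q.primeFactors = ∏ p ∈ q.primeFactors, M := (prod_const M).symm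
    _ ≤ ∏ p ∈ q.primeFactors, (if p < P then M else 1) * (p : ℝ) ^ ε :=
        prod_le_prod (fun _ _ ↦ by positivity) hfactor
    _ = M ^ #(q.primeFactors.filter (· < P)) * (∏ p ∈ q.primeFactors, (p : ℝ)) ^ ε := by
        rw [prod_mul_distrib, ← prod_filter, prod_const,
          Real.finsetProd_rpow _ _ fun _ _ ↦ by positivity]
    _ ≤ M ^ P * (q : ℝ) ^ ε := by gcongr

lemma norm_prod_primeFactors_le {R : Type*} [NormedCommRing R] [NormOneClass R] {f : ℕ → R}
    {M ε : ℝ} (hM : 1 ≤ M) (hε : 0 < ε) {q : ℕ} (hq : q ≠ 0)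
    (hf : ∀ p ∈ q.primeFactors, ‖f p‖ ≤ M) :
    ‖∏ p ∈ q.primeFactors, f p‖ ≤ M ^ ⌈M ^ (1 / ε)⌉₊ * (q : ℝ) ^ ε :=
  calc _ ≤ ∏ _ ∈ q.primeFactors, M :=
        (Finset.norm_prod_le _ _).trans (Finset.prod_le_prod (fun _ _ ↦ norm_nonneg _) hf)
    _ = M ^ q.primeFactors.card := Finset.prod_const M
    _ ≤ _ := pow_card_primeFactors_le hM hε hq

lemma norm_natCast_cpow_div_natCast_cpow_le {g p k : ℕ} {δ : ℝ} {s : ℂ} (hp : 0 < p) (hg : 0 < g)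
    (hgp : g ≤ p ^ k) (hδ : δ ≤ 1) (hs : -1 + δ ≤ s.re) :
    ‖(g : ℂ) ^ s / (p : ℂ) ^ ((k : ℂ) * (1 + s))‖ ≤ (p : ℝ) ^ (-(k * δ)) := by
  have hp0 : (0 : ℝ) < p := by exact_mod_cast hp
  have hre : ((k : ℂ) * (1 + s)).re = k * (1 + s.re) := by simp
  rw [norm_div, norm_natCast_cpow_of_pos hg, norm_natCast_cpow_of_pos hp, hre,
    div_eq_mul_inv, ← Real.rpow_neg hp0.le]
  have hgσ : (g : ℝ) ^ s.re ≤ (p : ℝ) ^ (k * max s.re 0) := by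
    rcases le_total 0 s.re with hσ | hσ
    · rw [max_eq_left hσ, Real.rpow_mul hp0.le, Real.rpow_natCast]
      exact Real.rpow_le_rpow (by positivity) (by exact_mod_cast hgp) hσ
    · rw [max_eq_right hσ, mul_zero, Real.rpow_zero]
      exact Real.rpow_le_one_of_one_le_of_nonpos (by exact_mod_cast hg) hσ
  have hmax : max s.re 0 ≤ 1 + s.re - δ := max_le (by linarith) (by linarith)
  calc (g : ℝ) ^ s.re * (p : ℝ) ^ (-(k * (1 + s.re)))
      ≤ (p : ℝ) ^ (k * max s.re 0) * (p : ℝ) ^ (-(k * (1 + s.re))) := by gcongr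
    _ = (p : ℝ) ^ (k * max s.re 0 - k * (1 + s.re)) := by rw [← Real.rpow_add hp0]; ring_nf
    _ ≤ (p : ℝ) ^ (-(k * δ)) := by
        apply Real.rpow_le_rpow_of_exponent_le (by exact_mod_cast hp)
        nlinarith [(Nat.cast_nonneg k : (0 : ℝ) ≤ k)]

lemma norm_natCast_cpow_div_natCast_cpow_le_two_rpow {g p k : ℕ} {δ : ℝ} {s : ℂ} (hp : p.Prime)
    (hg : 0 < g) (hgp : g ≤ p ^ k) (hδ0 : 0 ≤ δ) (hδ1 : δ ≤ 1) (hs : -1 + δ ≤ s.re) :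
    ‖(g : ℂ) ^ s / (p : ℂ) ^ ((k : ℂ) * (1 + s))‖ ≤ (2 : ℝ) ^ (-(k * δ)) :=
  (norm_natCast_cpow_div_natCast_cpow_le hp.pos hg hgp hδ1 hs).trans <|
    Real.rpow_le_rpow_of_nonpos two_pos (by exact_mod_cast hp.two_le)
      (neg_nonpos.mpr (by positivity))

end NumberTheory

section OneAdd

variable {𝕜 : Type*} [NormedDivisionRing 𝕜] {v w : 𝕜} {r : ℝ}

lemma one_sub_le_norm_one_add (hw : ‖w‖ ≤ r) : 1 - r ≤ ‖1 + w‖ := by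
  have := norm_sub_le (1 + w) w
  rw [add_sub_cancel_right, norm_one] at this
  linarith

lemma one_add_ne_zero_of_norm_lt_one (hw : ‖w‖ < 1) : 1 + w ≠ 0 := by
  have := one_sub_le_norm_one_add le_rfl (w := w)
  exact norm_pos_iff.mp (by linarith)

lemma norm_one_add_div_one_add_le (hr : r < 1) (hw : ‖w‖ ≤ r) (hv : ‖v‖ ≤ r) :
    ‖(1 + w) / (1 + v)‖ ≤ (1 + r) / (1 - r) := by
  rw [norm_div]
  exact div_le_div₀ (by linarith [norm_nonneg w]) (norm_add_le_of_le norm_one.le hw)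
    (by linarith) (one_sub_le_norm_one_add hv)

end OneAdd

lemma norm_two_div_pow_mul_one_add_le {p k : ℕ} (hp : 1 ≤ p) (hk : 2 ≤ k) {w : ℂ} {r : ℝ}
    (hr : r < 1) (hw : ‖w‖ ≤ r) :
    ‖2 / ((p : ℂ) ^ k * (1 + w))‖ ≤ 2 / (1 - r) * ((p : ℝ) ^ 2)⁻¹ := by
  have hp1 : (1 : ℝ) ≤ p := by exact_mod_cast hp
  have hden : (p : ℝ) ^ 2 * (1 - r) ≤ (p : ℝ) ^ k * ‖1 + w‖ :=
    mul_le_mul (pow_le_pow_right₀ hp1 hk) (one_sub_le_norm_one_add hw) (by linarith)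
      (by positivity)
  rw [norm_div, norm_mul, norm_pow, Complex.norm_natCast, Complex.norm_two, ← div_eq_mul_inv,
    div_div, mul_comm (1 - r)]
  exact div_le_div_of_nonneg_left zero_le_two (mul_pos (by positivity) (by linarith)) hden

lemma multipliable_and_norm_tprod_one_sub_two_div_le {k : ℕ} (hk : 2 ≤ k) {r : ℝ} (hr : r < 1)
    {w : Nat.Primes → ℂ} (hw : ∀ p, ‖w p‖ ≤ r) :
    Multipliable (fun p : Nat.Primes ↦ 1 - 2 / (((p : ℕ) : ℂ) ^ k * (1 + w p))) ∧
      ‖∏' p : Nat.Primes, (1 - 2 / (((p : ℕ) : ℂ) ^ k * (1 + w p)))‖ ≤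
        Real.exp (∑' p : Nat.Primes, 2 / (1 - r) * (((p : ℕ) : ℝ) ^ 2)⁻¹) := by
  have hb : Summable fun p : Nat.Primes ↦ 2 / (1 - r) * (((p : ℕ) : ℝ) ^ 2)⁻¹ :=
    ((Real.summable_nat_pow_inv.mpr one_lt_two).comp_injective Subtype.val_injective).mul_left _
  have hF : ∀ p : Nat.Primes, ‖(1 - 2 / (((p : ℕ) : ℂ) ^ k * (1 + w p))) - 1‖ ≤
      2 / (1 - r) * (((p : ℕ) : ℝ) ^ 2)⁻¹ := fun p ↦ by
    rw [sub_sub_cancel_left, norm_neg]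
    exact norm_two_div_pow_mul_one_add_le p.2.one_lt.le hk hr (hw p)
  have hFsum := hb.of_nonneg_of_le (fun _ ↦ norm_nonneg _) hF
  exact ⟨multipliable_of_summable_norm_sub_one hFsum,
    (norm_tprod_le_exp_tsum_norm_sub_one hFsum).trans <|
      Real.exp_le_exp.mpr (hFsum.tsum_le_tsum hF hb)⟩

theorem statement1 (k : ℕ) (hk : 2 ≤ k) (δ : ℝ) (hδ0 : 0 < δ) (hδ : δ < 1 / (2 * k))
    (ε : ℝ) (hε : 0 < ε) :
    ∃ C > 0, ∀ q : ℕ, 0 < q → ∀ s : ℂ, -1 + δ ≤ s.re →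
      (∀ p : ℕ, p.Prime →
        (1 + 1 / (p : ℂ) ^ ((k : ℂ) * (1 + s))) ≠ 0 ∧
        (1 + (Nat.gcd q (p ^ k) : ℂ) ^ s / (p : ℂ) ^ ((k : ℂ) * (1 + s))) ≠ 0) ∧
      Multipliable (fun p : Nat.Primes =>
        (1 - 2 / (((p : ℕ) : ℂ) ^ k *
          (1 + (Nat.gcd q ((p : ℕ) ^ k) : ℂ) ^ s / ((p : ℕ) : ℂ) ^ ((k : ℂ) * (1 + s)))))) ∧
      ‖Fstar k q s‖ ≤ C * (q : ℝ) ^ ε := by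
  have hδ1 : δ ≤ 1 := hδ.le.trans <| by
    rw [div_le_one (by positivity)]
    exact_mod_cast (by omega : 1 ≤ 2 * k)
  set r : ℝ := 2 ^ (-(k * δ))
  have hr : r < 1 := Real.rpow_lt_one_of_one_lt_of_neg one_lt_two (neg_neg_of_pos (by positivity))
  set M : ℝ := (1 + r) / (1 - r)
  have hM : 1 ≤ M := by rw [le_div_iff₀ (by linarith)]; linarith [show 0 ≤ r by positivity]
  refine ⟨M ^ ⌈M ^ (1 / ε)⌉₊ * Real.exp (∑' p : Nat.Primes, 2 / (1 - r) * (((p : ℕ) : ℝ) ^ 2)⁻¹),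
    by positivity, fun q hq s hs ↦ ?_⟩
  have hgcd : ∀ p : ℕ, p.Prime →
      ‖(Nat.gcd q (p ^ k) : ℂ) ^ s / (p : ℂ) ^ ((k : ℂ) * (1 + s))‖ ≤ r := fun p hp ↦
    norm_natCast_cpow_div_natCast_cpow_le_two_rpow hp (Nat.gcd_pos_of_pos_left _ hq)
      (Nat.le_of_dvd (pow_pos hp.pos k) (Nat.gcd_dvd_right _ _)) hδ0.le hδ1 hs
  have hone : ∀ p : ℕ, p.Prime → ‖1 / (p : ℂ) ^ ((k : ℂ) * (1 + s))‖ ≤ r := fun p hp ↦ by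
    simpa using norm_natCast_cpow_div_natCast_cpow_le_two_rpow (g := 1) hp one_pos
      (Nat.one_le_pow _ _ hp.pos) hδ0.le hδ1 hs
  obtain ⟨hmult, htprod⟩ :=
    multipliable_and_norm_tprod_one_sub_two_div_le hk hr fun p : Nat.Primes ↦ hgcd p p.2
  refine ⟨fun p hp ↦ ⟨one_add_ne_zero_of_norm_lt_one ((hone p hp).trans_lt hr),
    one_add_ne_zero_of_norm_lt_one ((hgcd p hp).trans_lt hr)⟩, hmult, ?_⟩
  rw [Fstar, norm_mul, mul_right_comm]
  refine mul_le_mul (norm_prod_primeFactors_le hM hε hq.ne' fun p hp ↦ ?_) htprod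
    (norm_nonneg _) (by positivity)
  have hp := Nat.prime_of_mem_primeFactors hp
  exact norm_one_add_div_one_add_le hr (hgcd p hp) (hone p hp)
end

section
/- Fix an integer k ≥ 2. For all positive integers q and n one has η(q,n) = η(q,(q,n)), and for every ε > 0 there is a constant C (depending only on k, ε) such that |η(q,n)| ≤ C q^{ε−1} for all positive integers q and n. -/
open ArithmeticFunction

/-- `η(q,a) = ∑_{d ≥ 1, (q,d^k) | a} μ(d)/[q, d^k]`. -/
noncomputable def eta (k q a : ℕ) : ℝ :=
  ∑' d : ℕ+, if Nat.gcd q ((d : ℕ) ^ k) ∣ a then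
    (moebius (d : ℕ) : ℝ) / (Nat.lcm q ((d : ℕ) ^ k) : ℝ) else 0

/-! ### Auxiliary lemmas -/

lemma summable_pnat_pow (k : ℕ) (hk : 2 ≤ k) : Summable (fun d : ℕ+ => 1 / (d:ℝ) ^ k) :=
  (Real.summable_one_div_nat_pow.mpr (by omega)).comp_injective PNat.coe_injective

lemma tsum_pnat_pow_le (k : ℕ) (hk : 2 ≤ k) : ∑' d : ℕ+, 1 / (d:ℝ) ^ k ≤ 2 := by
  have h2 : Summable (fun d : ℕ+ => 1/(d:ℝ)^2) := summable_pnat_pow 2 le_rfl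
  have hle : ∑' d : ℕ+, 1/(d:ℝ)^k ≤ ∑' d : ℕ+, 1/(d:ℝ)^2 := by
    refine Summable.tsum_le_tsum (fun d => ?_) (summable_pnat_pow k hk) h2
    apply one_div_le_one_div_of_le (by positivity)
    exact pow_le_pow_right₀ (by exact_mod_cast d.one_le) hk
  have heq : ∑' d : ℕ+, 1/(d:ℝ)^2 = ∑' n : ℕ, 1/(n:ℝ)^2 := by
    refine Function.Injective.tsum_eq PNat.coe_injective (f := fun n : ℕ => 1/(n:ℝ)^2) ?_
    intro n hn
    rcases Nat.eq_zero_or_pos n with rfl | h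
    · simp at hn
    · exact ⟨⟨n, h⟩, rfl⟩
  rw [heq, hasSum_zeta_two.tsum_eq] at hle
  nlinarith [Real.pi_lt_d2, Real.pi_pos, hle]

lemma two_pow_omega_le (ε : ℝ) (hε : 0 < ε) :
    ∃ C > (0:ℝ), ∀ q : ℕ, 0 < q → (2:ℝ) ^ q.primeFactors.card ≤ C * (q:ℝ) ^ ε := by
  obtain ⟨B, hB⟩ := exists_nat_ge ((2:ℝ) ^ (2/ε))
  refine ⟨(4:ℝ) ^ B, by positivity, fun q hq => ?_⟩
  set s := q.primeFactors with hs
  set t := s.filter (fun p => B < p) with ht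
  have hcard : s.card ≤ t.card + B := by
    have h1 : s.filter (fun p => ¬ B < p) ⊆ Finset.Ioc 1 B := by
      intro p hp
      simp only [Finset.mem_filter, not_lt] at hp
      have hp2 := (Nat.prime_of_mem_primeFactors (hs ▸ hp.1)).two_le
      simp only [Finset.mem_Ioc]
      omega
    have h1' := Finset.card_le_card h1
    rw [Nat.card_Ioc] at h1'
    have h3 := Finset.card_filter_add_card_filter_not (s := s) (p := fun p => B < p)
    rw [← ht] at h3
    omega
  have hq1 : ((B:ℝ)+1) ^ t.card ≤ (q:ℝ) := by
    have hdvd : ∏ p ∈ t, p ∣ q :=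
      (Finset.prod_dvd_prod_of_subset t s _ (Finset.filter_subset _ _)).trans
        (Nat.prod_primeFactors_dvd q)
    have hprod : (B+1) ^ t.card ≤ ∏ p ∈ t, p := by
      apply Finset.pow_card_le_prod
      intro x hx
      rw [ht, Finset.mem_filter] at hx
      omega
    have := (hprod.trans (Nat.le_of_dvd hq hdvd))
    exact_mod_cast this
  have h4 : (4:ℝ) ≤ ((B:ℝ)+1) ^ (ε:ℝ) := by
    have h2B : (2:ℝ) ^ (2/ε) ≤ (B:ℝ) + 1 := hB.trans (by linarith)
    have := Real.rpow_le_rpow (by positivity) h2B hε.le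
    rw [← Real.rpow_mul (by norm_num), div_mul_cancel₀ _ hε.ne'] at this
    have h22 : (2:ℝ) ^ (2:ℝ) = 4 := by
      rw [show (2:ℝ) = ((2:ℕ):ℝ) from by norm_num, Real.rpow_natCast]; norm_num
    linarith
  have hqε : (4:ℝ) ^ t.card ≤ (q:ℝ) ^ ε := by
    calc (4:ℝ) ^ t.card ≤ (((B:ℝ)+1) ^ (ε:ℝ)) ^ t.card := by
          exact pow_le_pow_left₀ (by norm_num) h4 _
      _ = (((B:ℝ)+1) ^ t.card) ^ (ε:ℝ) := by
          rw [← Real.rpow_natCast (((B:ℝ)+1) ^ (ε:ℝ)) t.card, ← Real.rpow_mul (by positivity),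
            mul_comm, Real.rpow_mul (by positivity), Real.rpow_natCast]
      _ ≤ (q:ℝ) ^ ε := Real.rpow_le_rpow (by positivity) hq1 hε.le
  calc (2:ℝ) ^ s.card ≤ (2:ℝ) ^ (t.card + B) := by
        apply pow_le_pow_right₀ (by norm_num) hcard
    _ = (2:ℝ) ^ t.card * 2 ^ B := pow_add 2 _ _
    _ ≤ (4:ℝ) ^ t.card * 4 ^ B := by
        apply mul_le_mul (pow_le_pow_left₀ (by norm_num) (by norm_num) _)
          (pow_le_pow_left₀ (by norm_num) (by norm_num) _) (by positivity) (by positivity)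
    _ ≤ (q:ℝ) ^ ε * 4 ^ B := by
        apply mul_le_mul_of_nonneg_right hqε (by positivity)
    _ = 4 ^ B * (q:ℝ) ^ ε := mul_comm _ _

lemma card_sqfree_divisors_le (q : ℕ) (hq : 0 < q) :
    (q.divisors.filter Squarefree).card ≤ 2 ^ q.primeFactors.card := by
  rw [← Finset.card_powerset]
  apply Finset.card_le_card_of_injOn (fun r => r.primeFactors)
  · intro r hr
    simp only [Finset.mem_coe, Finset.mem_filter, Nat.mem_divisors] at hr
    exact Finset.mem_powerset.mpr (Nat.primeFactors_mono hr.1.1 hq.ne')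
  · intro r1 h1 r2 h2 h
    simp only [Finset.coe_filter, Set.mem_setOf_eq, Nat.mem_divisors] at h1 h2
    simp only at h
    rw [← Nat.prod_primeFactors_of_squarefree h1.2, ← Nat.prod_primeFactors_of_squarefree h2.2, h]

section main
variable (k q a : ℕ)

/-- The summand of `eta`. -/
noncomputable def etaf (d : ℕ+) : ℝ :=
  if Nat.gcd q ((d : ℕ) ^ k) ∣ a then
    (moebius (d : ℕ) : ℝ) / (Nat.lcm q ((d : ℕ) ^ k) : ℝ) else 0

/-- A pointwise upper bound for `|etaf|`. -/
noncomputable def etaB (d : ℕ+) : ℝ :=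
  if Squarefree (d:ℕ) then (Nat.gcd q ((d:ℕ)^k) : ℝ) / ((q:ℝ) * ((d:ℕ):ℝ)^k) else 0

variable {k q a}

lemma lcm_pos (hq : 0 < q) (d : ℕ+) : (0:ℝ) < (Nat.lcm q ((d:ℕ)^k) : ℝ) := by
  have := Nat.pos_of_ne_zero (Nat.lcm_ne_zero hq.ne' (pow_ne_zero k d.pos.ne'))
  exact_mod_cast this

lemma etaB_nonneg (d : ℕ+) : 0 ≤ etaB k q d := by
  unfold etaB; positivity

lemma abs_etaf_le_etaB (hq : 0 < q) (d : ℕ+) : |etaf k q a d| ≤ etaB k q d := by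
  unfold etaf etaB
  by_cases hsq : Squarefree (d:ℕ)
  · rw [if_pos hsq]
    by_cases hdvd : Nat.gcd q ((d:ℕ)^k) ∣ a
    · rw [if_pos hdvd, abs_div]
      have hmu : |((moebius (d:ℕ) : ℤ) : ℝ)| = 1 := by
        exact_mod_cast abs_moebius_eq_one_of_squarefree hsq
      rw [hmu, abs_of_pos (lcm_pos hq d)]
      have hL := lcm_pos hq (k := k) d
      have hG : (0:ℕ) < Nat.gcd q ((d:ℕ)^k) := Nat.gcd_pos_of_pos_left _ hq
      have key : (Nat.gcd q ((d:ℕ)^k) : ℝ) * (Nat.lcm q ((d:ℕ)^k) : ℝ) = (q:ℝ) * ((d:ℕ):ℝ)^k := by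
        exact_mod_cast congrArg (Nat.cast (R := ℝ)) (Nat.gcd_mul_lcm q ((d:ℕ)^k))
      rw [div_le_div_iff₀ (lcm_pos hq d) (by positivity), one_mul]
      linarith [key]
    · rw [if_neg hdvd, abs_zero]; positivity
  · rw [if_neg hsq]
    have : moebius (d:ℕ) = 0 := moebius_eq_zero_of_not_squarefree hsq
    by_cases hdvd : Nat.gcd q ((d:ℕ)^k) ∣ a <;> simp [hdvd, this]

lemma etaB_le (hk : 2 ≤ k) (hq : 0 < q) (d : ℕ+) : etaB k q d ≤ 1 / (d:ℝ) ^ k := by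
  unfold etaB
  have hd : (0:ℝ) < ((d:ℕ):ℝ)^k := by positivity
  by_cases hsq : Squarefree (d:ℕ)
  · rw [if_pos hsq]
    have hG : (Nat.gcd q ((d:ℕ)^k) : ℝ) ≤ (q:ℝ) := by
      exact_mod_cast Nat.le_of_dvd hq (Nat.gcd_dvd_left _ _)
    have hGnn : (0:ℝ) ≤ (Nat.gcd q ((d:ℕ)^k) : ℝ) := by positivity
    rw [div_le_div_iff₀ (by positivity) (by positivity)]
    nlinarith [hd]
  · rw [if_neg hsq]; positivity

lemma summable_etaB (hk : 2 ≤ k) (hq : 0 < q) : Summable (etaB k q) :=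
  Summable.of_nonneg_of_le etaB_nonneg (etaB_le hk hq) (summable_pnat_pow k hk)

lemma summable_etaf (hk : 2 ≤ k) (hq : 0 < q) : Summable (etaf k q a) := by
  apply Summable.of_norm
  exact Summable.of_nonneg_of_le (fun d => norm_nonneg _)
    (fun d => abs_etaf_le_etaB hq d) (summable_etaB hk hq)

lemma summable_abs_etaf (hk : 2 ≤ k) (hq : 0 < q) :
    Summable (fun d => |etaf k q a d|) :=
  Summable.of_nonneg_of_le (fun d => abs_nonneg _) (fun d => abs_etaf_le_etaB hq d)
    (summable_etaB hk hq)

lemma tsum_etaB_le (hk : 2 ≤ k) (hq : 0 < q) :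
    ∑' d, etaB k q d ≤ ((q.divisors.filter Squarefree).card : ℝ) *
      ((1/(q:ℝ)) * ∑' m : ℕ+, 1/(m:ℝ)^k) := by
  classical
  set D := q.divisors.filter Squarefree with hD
  set g : ℕ × ℕ+ → ℝ :=
    fun p => (if p.1 ∈ D then (1:ℝ) else 0) * (1/((q:ℝ) * ((p.2:ℕ):ℝ)^k)) with hg
  have hgpos : ∀ p, 0 ≤ g p := by
    intro p; rw [hg]; dsimp only; positivity
  have hgcdpos : ∀ d : ℕ+, 0 < Nat.gcd q (d:ℕ) := fun d => Nat.gcd_pos_of_pos_left _ hq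
  set e : ℕ+ → ℕ × ℕ+ := fun d =>
    (Nat.gcd q (d:ℕ), ⟨(d:ℕ) / Nat.gcd q (d:ℕ),
      Nat.div_pos (Nat.le_of_dvd d.pos (Nat.gcd_dvd_right q (d:ℕ))) (hgcdpos d)⟩) with he
  have hrecover : ∀ d : ℕ+, Nat.gcd q (d:ℕ) * ((d:ℕ) / Nat.gcd q (d:ℕ)) = (d:ℕ) :=
    fun d => Nat.mul_div_cancel' (Nat.gcd_dvd_right q (d:ℕ))
  have hinj : Function.Injective e := by
    intro d1 d2 h
    replace h := Prod.mk.inj h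
    obtain ⟨h1, h2⟩ := h
    have h2' : (d1:ℕ) / Nat.gcd q (d1:ℕ) = (d2:ℕ) / Nat.gcd q (d2:ℕ) := congrArg PNat.val h2
    apply PNat.coe_injective
    rw [← hrecover d1, h2', h1]
    exact hrecover d2
  have hpt : ∀ d : ℕ+, etaB k q d ≤ g (e d) := by
    intro d
    by_cases hsq : Squarefree (d:ℕ)
    · have hr : Nat.gcd q (d:ℕ) ∈ D := by
        rw [hD, Finset.mem_filter, Nat.mem_divisors]
        exact ⟨⟨Nat.gcd_dvd_left _ _, hq.ne'⟩, hsq.squarefree_of_dvd (Nat.gcd_dvd_right _ _)⟩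
      rw [hg, he]
      dsimp only
      rw [if_pos hr, one_mul]
      unfold etaB
      rw [if_pos hsq]
      have hGdvd : Nat.gcd q ((d:ℕ)^k) ∣ Nat.gcd q (d:ℕ) ^ k := gcd_pow_right_dvd_pow_gcd
      have hGle : (Nat.gcd q ((d:ℕ)^k) : ℝ) ≤ ((Nat.gcd q (d:ℕ) : ℝ)) ^ k := by
        have := Nat.le_of_dvd (pow_pos (hgcdpos d) k) hGdvd
        exact_mod_cast this
      have hdm : ((d:ℕ):ℝ) = (Nat.gcd q (d:ℕ) : ℝ) * (((d:ℕ) / Nat.gcd q (d:ℕ) : ℕ) : ℝ) := by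
        exact_mod_cast (hrecover d).symm
      set R := (Nat.gcd q (d:ℕ) : ℝ) with hRdef
      set M := (((d:ℕ) / Nat.gcd q (d:ℕ) : ℕ) : ℝ) with hMdef
      have hRpos : (0:ℝ) < R := by rw [hRdef]; exact_mod_cast hgcdpos d
      have hMpos : (0:ℝ) < M := by
        rw [hMdef]
        have : 0 < (d:ℕ) / Nat.gcd q (d:ℕ) :=
          Nat.div_pos (Nat.le_of_dvd d.pos (Nat.gcd_dvd_right q (d:ℕ))) (hgcdpos d)
        exact_mod_cast this
      simp only [PNat.mk_coe]
      rw [div_le_div_iff₀ (by positivity) (by positivity), hdm, one_mul, mul_pow]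
      have hGnn : (0:ℝ) ≤ (Nat.gcd q ((d:ℕ)^k) : ℝ) := by positivity
      have hq' : (0:ℝ) < (q:ℝ) := by exact_mod_cast hq
      nlinarith [pow_pos hMpos k, pow_pos hRpos k,
        mul_le_mul_of_nonneg_right hGle (le_of_lt (mul_pos hq' (pow_pos hMpos k)))]
    · unfold etaB
      rw [if_neg hsq]
      exact hgpos _
  have hind : Summable (fun r : ℕ => if r ∈ D then (1:ℝ) else 0) :=
    summable_of_ne_finset_zero (s := D) (fun r hr => if_neg hr)
  have hm : Summable (fun m : ℕ+ => 1/((q:ℝ) * ((m:ℕ):ℝ)^k)) := by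
    have : (fun m : ℕ+ => 1/((q:ℝ) * ((m:ℕ):ℝ)^k))
        = fun m : ℕ+ => (1/(q:ℝ)) * (1/((m:ℕ):ℝ)^k) := by
      funext m; rw [one_div_mul_one_div]
    rw [this]
    exact (summable_pnat_pow k hk).mul_left _
  have hgsum : Summable g := by
    rw [hg]
    exact Summable.mul_of_nonneg (f := fun r : ℕ => if r ∈ D then (1:ℝ) else 0)
      (g := fun m : ℕ+ => 1/((q:ℝ) * ((m:ℕ):ℝ)^k)) hind hm
      (fun r => by dsimp only; split <;> norm_num)
      (fun m => by dsimp only; positivity)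
  have step1 : ∑' d, etaB k q d ≤ ∑' p, g p :=
    Summable.tsum_le_tsum_of_inj e hinj (fun p _ => hgpos p) hpt (summable_etaB hk hq) hgsum
  have step2 : ∑' p, g p = (D.card : ℝ) * ((1/(q:ℝ)) * ∑' m : ℕ+, 1/((m:ℕ):ℝ)^k) := by
    rw [hg]
    rw [← Summable.tsum_mul_tsum (f := fun r : ℕ => if r ∈ D then (1:ℝ) else 0)
      (g := fun m : ℕ+ => 1/((q:ℝ) * ((m:ℕ):ℝ)^k)) hind hm (by rw [hg] at hgsum; exact hgsum)]
    congr 1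
    · rw [tsum_eq_sum (s := D) (fun r hr => if_neg hr)]
      rw [Finset.sum_congr rfl (fun r hr => if_pos hr)]
      simp
    · have : (fun m : ℕ+ => 1/((q:ℝ) * ((m:ℕ):ℝ)^k))
          = fun m : ℕ+ => (1/(q:ℝ)) * (1/((m:ℕ):ℝ)^k) := by
        funext m; rw [one_div_mul_one_div]
      rw [this, tsum_mul_left]
  rw [step2] at step1
  exact step1

lemma eta_abs_le (hk : 2 ≤ k) (hq : 0 < q) (a : ℕ) :
    |eta k q a| ≤ 2 * 2 ^ q.primeFactors.card / q := by
  have h1 : eta k q a = ∑' d, etaf k q a d := rfl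
  have habs : |∑' d, etaf k q a d| ≤ ∑' d, |etaf k q a d| := by
    simpa only [Real.norm_eq_abs] using
      norm_tsum_le_tsum_norm (f := etaf k q a)
        (by simpa only [Real.norm_eq_abs] using summable_abs_etaf (a := a) hk hq)
  have h2 : ∑' d, |etaf k q a d| ≤ ∑' d, etaB k q d :=
    Summable.tsum_le_tsum (fun d => abs_etaf_le_etaB hq d) (summable_abs_etaf hk hq)
      (summable_etaB hk hq)
  have h3 := tsum_etaB_le (k := k) (q := q) hk hq
  have hcard : ((q.divisors.filter Squarefree).card : ℝ) ≤ 2 ^ q.primeFactors.card := by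
    exact_mod_cast card_sqfree_divisors_le q hq
  have hZ := tsum_pnat_pow_le k hk
  have hZnn : (0:ℝ) ≤ ∑' m : ℕ+, 1/(m:ℝ)^k := tsum_nonneg (fun m => by positivity)
  have hqpos : (0:ℝ) < q := by exact_mod_cast hq
  have h4 : ((q.divisors.filter Squarefree).card : ℝ) *
      ((1/(q:ℝ)) * ∑' m : ℕ+, 1/(m:ℝ)^k) ≤ 2 * 2 ^ q.primeFactors.card / q := by
    have : ((q.divisors.filter Squarefree).card : ℝ) *
        ((1/(q:ℝ)) * ∑' m : ℕ+, 1/(m:ℝ)^k) ≤ (2 ^ q.primeFactors.card : ℝ) * ((1/(q:ℝ)) * 2) := by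
      apply mul_le_mul hcard ?_ (by positivity) (by positivity)
      apply mul_le_mul_of_nonneg_left hZ (by positivity)
    calc _ ≤ (2 ^ q.primeFactors.card : ℝ) * ((1/(q:ℝ)) * 2) := this
      _ = 2 * 2 ^ q.primeFactors.card / q := by ring
  rw [h1]
  exact habs.trans (h2.trans (h3.trans h4))

end main

theorem statement6 (k : ℕ) (hk : 2 ≤ k) :
    (∀ q n : ℕ, 0 < q → 0 < n → eta k q n = eta k q (Nat.gcd q n)) ∧
    ∀ ε > (0 : ℝ), ∃ C > (0 : ℝ), ∀ q n : ℕ, 0 < q → 0 < n →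
      |eta k q n| ≤ C * (q : ℝ) ^ (ε - 1) := by
  constructor
  · intro q n hq hn
    unfold eta
    refine tsum_congr (fun d => ?_)
    by_cases h : Nat.gcd q ((d:ℕ)^k) ∣ Nat.gcd q n
    · rw [if_pos (h.trans (Nat.gcd_dvd_right q n)), if_pos h]
    · rw [if_neg (fun hh => h (Nat.dvd_gcd (Nat.gcd_dvd_left _ _) hh)), if_neg h]
  · intro ε hε
    obtain ⟨C', hC'pos, hC'⟩ := two_pow_omega_le ε hε
    refine ⟨2*C', by linarith, fun q n hq hn => ?_⟩
    have h1 := eta_abs_le hk hq n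
    have h2 := hC' q hq
    have hqpos : (0:ℝ) < q := by exact_mod_cast hq
    have hpow : (q:ℝ) ^ (ε - 1) = (q:ℝ)^ε / q := by
      rw [Real.rpow_sub hqpos, Real.rpow_one]
    rw [hpow]
    calc |eta k q n| ≤ 2 * 2 ^ q.primeFactors.card / q := h1
      _ ≤ 2 * (C' * (q:ℝ)^ε) / q := by gcongr
      _ = 2*C' * ((q:ℝ)^ε / q) := by ring
end

section
/- Fix an integer k ≥ 2, let S denote the set of k-free positive integers (those divisible by no k-th power of a prime), and define η(q,a) = ∑_{d ≥ 1, (q,d^k) | a} μ(d)/[q, d^k]. Then for all positive integers q, a: (1/X) · #{ n ≤ X : n ∈ S, n ≡ a (mod q) } → η(q,a) as X → ∞. -/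
/-!
Since `d ^ k ∣ n ↔ d ∣ Nat.floorRoot k n` and `n` is `k`-free iff `Nat.floorRoot k n = 1`,
Möbius inversion gives `1[n k-free] = ∑_{d^k ∣ n} μ(d)`, so the count equals
`∑_d μ(d) A_d(X)`, where `A_d(X)` counts the `n ≤ X` with `d ^ k ∣ n` and `n ≡ a (mod q)`.
By the Chinese remainder theorem these `n` form one class modulo `[q, d^k]` when
`(q, d^k) ∣ a` and none otherwise, so `A_d(X) / X` tends to `1 / [q, d^k]` or to `0`.
The bound `A_d(X) ≤ X / d^k ≤ X / d^2` lets dominated convergence (Tannery's theorem) pass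
the limit through the sum.
-/

open ArithmeticFunction Filter

open Finset
open scoped ArithmeticFunction.Moebius

theorem Nat.floorRoot_eq_one_iff {k n : ℕ} :
    Nat.floorRoot k n = 1 ↔ ∀ p : ℕ, p.Prime → ¬ p ^ k ∣ n := by
  simp only [Nat.pow_dvd_iff_dvd_floorRoot]
  exact ⟨fun h p hp hdvd => hp.not_dvd_one (h ▸ hdvd),
    fun h => Nat.eq_one_iff_not_exists_prime_dvd.2 h⟩

open scoped Classical in
theorem sum_moebius_divisors_floorRoot (k n : ℕ) :
    ∑ d ∈ (Nat.floorRoot k n).divisors, μ d = if ∀ p : ℕ, p.Prime → ¬ p ^ k ∣ n then 1 else 0 := by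
  rw [← coe_mul_zeta_apply, moebius_mul_coe_zeta, one_apply]
  simp only [Nat.floorRoot_eq_one_iff]

open scoped Classical in
theorem card_filter_kFree_eq_sum_moebius {k : ℕ} (hk : k ≠ 0) (N : ℕ) (Q : ℕ → Prop)
    [DecidablePred Q] :
    (#{n ∈ Ioc 0 N | (∀ p : ℕ, p.Prime → ¬ p ^ k ∣ n) ∧ Q n} : ℤ) =
      ∑ d ∈ Ioc 0 N, μ d * #{n ∈ Ioc 0 N | d ^ k ∣ n ∧ Q n} := by
  have hmem : ∀ n d, (n ∈ {n ∈ Ioc 0 N | Q n} ∧ d ∈ (Nat.floorRoot k n).divisors) ↔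
      (n ∈ {n ∈ Ioc 0 N | d ^ k ∣ n ∧ Q n} ∧ d ∈ Ioc 0 N) := by
    intro n d
    simp only [mem_filter, mem_Ioc, Nat.mem_divisors, ← Nat.pow_dvd_iff_dvd_floorRoot,
      ne_eq, Nat.floorRoot_eq_zero, hk, false_or]
    constructor
    · rintro ⟨⟨⟨hn, hnN⟩, hQ⟩, hdvd, -⟩
      have hd : 0 < d := Nat.pos_of_ne_zero fun hd => by simp [hd, hk, hn.ne'] at hdvd
      exact ⟨⟨⟨hn, hnN⟩, hdvd, hQ⟩, hd,
        (Nat.le_self_pow hk d).trans ((Nat.le_of_dvd hn hdvd).trans hnN)⟩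
    · rintro ⟨⟨⟨hn, hnN⟩, hdvd, hQ⟩, -⟩
      exact ⟨⟨⟨hn, hnN⟩, hQ⟩, hdvd, hn.ne'⟩
  calc (#{n ∈ Ioc 0 N | (∀ p : ℕ, p.Prime → ¬ p ^ k ∣ n) ∧ Q n} : ℤ)
      = ∑ n ∈ {n ∈ Ioc 0 N | Q n}, ∑ d ∈ (Nat.floorRoot k n).divisors, μ d := by
        simp only [sum_moebius_divisors_floorRoot, sum_boole, filter_filter, and_comm]
    _ = ∑ d ∈ Ioc 0 N, ∑ n ∈ {n ∈ Ioc 0 N | d ^ k ∣ n ∧ Q n}, μ d := sum_comm' hmem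
    _ = ∑ d ∈ Ioc 0 N, μ d * #{n ∈ Ioc 0 N | d ^ k ∣ n ∧ Q n} := by
        simp only [sum_const, nsmul_eq_mul, mul_comm]

theorem Nat.card_setOf_pos_le_eq_card_filter (X : ℝ) (P : ℕ → Prop) [DecidablePred P] :
    Nat.card {n : ℕ | 0 < n ∧ (n : ℝ) ≤ X ∧ P n} = #{n ∈ Ioc 0 ⌊X⌋₊ | P n} := by
  have hset : {n : ℕ | 0 < n ∧ (n : ℝ) ≤ X ∧ P n} = ↑({n ∈ Ioc 0 ⌊X⌋₊ | P n}) := by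
    ext n
    simp only [Set.mem_ofPred_eq, coe_filter, mem_Ioc, and_assoc]
    exact and_congr_right fun hn => and_congr_left' (Nat.le_floor_iff' hn.ne').symm
  rw [hset, Nat.card_coe_set_eq, Set.ncard_coe_finset]

theorem card_kFree_eq_tsum_moebius {k : ℕ} (hk : k ≠ 0) (X : ℝ) (Q : ℕ → Prop)
    [DecidablePred Q] :
    (Nat.card {n : ℕ | 0 < n ∧ (n : ℝ) ≤ X ∧ (∀ p : ℕ, p.Prime → ¬ p ^ k ∣ n) ∧ Q n} : ℝ) =
      ∑' d : ℕ, (μ d : ℝ) * #{n ∈ Ioc 0 ⌊X⌋₊ | d ^ k ∣ n ∧ Q n} := by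
  classical
  rw [Nat.card_setOf_pos_le_eq_card_filter, tsum_eq_sum (s := Ioc 0 ⌊X⌋₊)]
  · exact_mod_cast card_filter_kFree_eq_sum_moebius hk ⌊X⌋₊ Q
  · intro d hd
    rcases Nat.eq_zero_or_pos d with rfl | hd0
    · simp
    have hempty : #{n ∈ Ioc 0 ⌊X⌋₊ | d ^ k ∣ n ∧ Q n} = 0 := by
      refine Finset.card_eq_zero.2 (filter_false_of_mem fun n hn hdQ => hd ?_)
      obtain ⟨hn, hnX⟩ := mem_Ioc.1 hn
      exact mem_Ioc.2 ⟨hd0, (Nat.le_self_pow hk d).trans ((Nat.le_of_dvd hn hdQ.1).trans hnX)⟩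
    simp [hempty]

theorem Nat.abs_card_filter_Ioc_modEq_sub_div_le {r : ℕ} (hr : 0 < r) (N c : ℕ) :
    |(#{n ∈ Ioc 0 N | n ≡ c [MOD r]} : ℚ) - N / r| ≤ 1 := by
  have hcard := congrArg (fun z : ℤ => (z : ℚ)) (Nat.Ioc_filter_modEq_card 0 N hr c)
  simp only [Int.cast_natCast, Int.cast_max, Int.cast_sub, Int.cast_zero] at hcard
  have hN := Int.floor_le ((N - c : ℚ) / r)
  have hN' := Int.sub_one_lt_floor ((N - c : ℚ) / r)
  have h0 := Int.floor_le (((0 : ℕ) - c : ℚ) / r)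
  have h0' := Int.sub_one_lt_floor (((0 : ℕ) - c : ℚ) / r)
  have hsplit : (N - c : ℚ) / r - ((0 : ℕ) - c : ℚ) / r = N / r := by push_cast; ring
  have hNr : 0 ≤ (N : ℚ) / r := by positivity
  rw [hcard, abs_le]
  constructor <;> cases max_cases (⌊(N - c : ℚ) / r⌋ - ⌊((0 : ℕ) - c : ℚ) / r⌋ : ℚ) 0 <;> linarith

theorem Nat.abs_card_filter_Ioc_floor_modEq_sub_div_le {r : ℕ} (hr : 0 < r) {X : ℝ} (hX : 0 ≤ X)
    (c : ℕ) : |(#{n ∈ Ioc 0 ⌊X⌋₊ | n ≡ c [MOD r]} : ℝ) - X / r| ≤ 2 := by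
  have hcount : |(#{n ∈ Ioc 0 ⌊X⌋₊ | n ≡ c [MOD r]} : ℝ) - ⌊X⌋₊ / r| ≤ 1 := by
    have h := Nat.abs_card_filter_Ioc_modEq_sub_div_le hr ⌊X⌋₊ c
    rw [← Rat.cast_le (K := ℝ)] at h
    push_cast at h
    exact h
  have hfloor : |(⌊X⌋₊ : ℝ) / r - X / r| ≤ 1 := by
    have hr1 : (1 : ℝ) ≤ r := by exact_mod_cast hr
    rw [← sub_div, abs_div, Nat.abs_cast, div_le_one (by positivity), abs_sub_comm,
      abs_of_nonneg (sub_nonneg.2 (Nat.floor_le hX))]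
    linarith [Nat.lt_floor_add_one X]
  linarith [abs_sub_le (#{n ∈ Ioc 0 ⌊X⌋₊ | n ≡ c [MOD r]} : ℝ) (⌊X⌋₊ / r) (X / r)]

theorem Nat.exists_dvd_and_modEq_iff_modEq_lcm {q D a : ℕ} (h : Nat.gcd q D ∣ a) :
    ∃ c, ∀ n, D ∣ n ∧ n ≡ a [MOD q] ↔ n ≡ c [MOD Nat.lcm q D] := by
  obtain ⟨c, hcq, hcD⟩ := Nat.chineseRemainder' (n := q) (m := D) (a := a) (b := 0)
    (Nat.modEq_zero_iff_dvd.2 h)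
  refine ⟨c, fun n => ⟨fun ⟨hD, hq⟩ => ?_, fun hn => ?_⟩⟩
  · exact Nat.mod_lcm (hq.trans hcq.symm)
      ((Nat.modEq_zero_iff_dvd.2 hD).trans hcD.symm)
  · exact ⟨Nat.modEq_zero_iff_dvd.1 ((hn.of_dvd (Nat.dvd_lcm_right q D)).trans hcD),
      (hn.of_dvd (Nat.dvd_lcm_left q D)).trans hcq⟩

theorem Nat.card_filter_dvd_modEq_eq_zero {q D a : ℕ} (h : ¬ Nat.gcd q D ∣ a) (s : Finset ℕ) :
    #{n ∈ s | D ∣ n ∧ n ≡ a [MOD q]} = 0 := by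
  refine Finset.card_eq_zero.2 (filter_false_of_mem fun n _ hn => h ?_)
  obtain ⟨hD, hq⟩ := hn
  exact Nat.modEq_zero_iff_dvd.1 ((hq.of_dvd (Nat.gcd_dvd_left q D)).symm.trans
    (Nat.modEq_zero_iff_dvd.2 ((Nat.gcd_dvd_right q D).trans hD)))

theorem Nat.card_filter_Ioc_floor_dvd_le {X : ℝ} (hX : 0 ≤ X) (D : ℕ) (P : ℕ → Prop)
    [DecidablePred P] : (#{n ∈ Ioc 0 ⌊X⌋₊ | D ∣ n ∧ P n} : ℝ) ≤ X / D := by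
  calc (#{n ∈ Ioc 0 ⌊X⌋₊ | D ∣ n ∧ P n} : ℝ) ≤ #{n ∈ Ioc 0 ⌊X⌋₊ | D ∣ n} := by
        exact_mod_cast card_le_card (monotone_filter_right _ fun _ _ h => And.left h)
    _ = (⌊X⌋₊ / D : ℕ) := by rw [Nat.Ioc_filter_dvd_card_eq_div]
    _ ≤ ⌊X⌋₊ / D := Nat.cast_div_le
    _ ≤ X / D := by gcongr; exact Nat.floor_le hX

theorem Nat.abs_card_filter_dvd_modEq_sub_div_lcm_le {q D a : ℕ} (hq : q ≠ 0) (hD : D ≠ 0)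
    (h : Nat.gcd q D ∣ a) {X : ℝ} (hX : 0 ≤ X) :
    |(#{n ∈ Ioc 0 ⌊X⌋₊ | D ∣ n ∧ n ≡ a [MOD q]} : ℝ) - X / Nat.lcm q D| ≤ 2 := by
  obtain ⟨c, hc⟩ := Nat.exists_dvd_and_modEq_iff_modEq_lcm h
  simp only [hc]
  exact Nat.abs_card_filter_Ioc_floor_modEq_sub_div_le
    (Nat.pos_of_ne_zero (Nat.lcm_ne_zero hq hD)) hX c

theorem tendsto_div_self_of_abs_sub_mul_le {f : ℝ → ℝ} {c C : ℝ}
    (h : ∀ᶠ X in atTop, |f X - c * X| ≤ C) : Tendsto (fun X => f X / X) atTop (nhds c) := by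
  have herr : Tendsto (fun X => (f X - c * X) / X) atTop (nhds 0) := by
    refine squeeze_zero_norm' ?_ ((tendsto_const_nhds (x := C)).div_atTop tendsto_id)
    filter_upwards [h, eventually_gt_atTop 0] with X hfX hX
    rw [norm_div, Real.norm_eq_abs, Real.norm_eq_abs, abs_of_pos hX, id]
    gcongr
  rw [← add_zero c]
  refine (herr.const_add c).congr' ?_
  filter_upwards [eventually_ne_atTop 0] with X hX
  field_simp
  ring

theorem Nat.tendsto_card_filter_dvd_modEq_div {q D : ℕ} (hq : q ≠ 0) (hD : D ≠ 0) (a : ℕ) :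
    Tendsto (fun X : ℝ => (#{n ∈ Ioc 0 ⌊X⌋₊ | D ∣ n ∧ n ≡ a [MOD q]} : ℝ) / X) atTop
      (nhds (if Nat.gcd q D ∣ a then (Nat.lcm q D : ℝ)⁻¹ else 0)) := by
  split_ifs with h
  · refine tendsto_div_self_of_abs_sub_mul_le (C := 2) ?_
    filter_upwards [eventually_ge_atTop 0] with X hX
    rw [inv_mul_eq_div]
    exact Nat.abs_card_filter_dvd_modEq_sub_div_lcm_le hq hD h hX
  · simp only [Nat.card_filter_dvd_modEq_eq_zero h, Nat.cast_zero, zero_div]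
    exact tendsto_const_nhds

theorem norm_moebius_mul_card_filter_pow_dvd_div_le {k : ℕ} (hk : 2 ≤ k) {X : ℝ} (hX : 0 < X)
    (d : ℕ) (P : ℕ → Prop) [DecidablePred P] :
    ‖(μ d : ℝ) * #{n ∈ Ioc 0 ⌊X⌋₊ | d ^ k ∣ n ∧ P n} / X‖ ≤ 1 / (d : ℝ) ^ 2 := by
  calc ‖(μ d : ℝ) * #{n ∈ Ioc 0 ⌊X⌋₊ | d ^ k ∣ n ∧ P n} / X‖
      ≤ #{n ∈ Ioc 0 ⌊X⌋₊ | d ^ k ∣ n ∧ P n} / X := by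
        rw [norm_div, norm_mul, Real.norm_eq_abs, Real.norm_eq_abs, Real.norm_eq_abs,
          abs_of_pos hX, Nat.abs_cast]
        gcongr
        exact mul_le_of_le_one_left (by positivity) (by exact_mod_cast abs_moebius_le_one)
    _ ≤ X / (d ^ k : ℕ) / X := by
        gcongr
        exact Nat.card_filter_Ioc_floor_dvd_le hX.le _ P
    _ = 1 / (d : ℝ) ^ k := by
        rw [div_div_cancel_left' hX.ne', one_div, Nat.cast_pow]
    _ ≤ 1 / (d : ℝ) ^ 2 := by
        rcases Nat.eq_zero_or_pos d with rfl | hd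
        · -- both sides are `1 / 0 = 0`
          simp [zero_pow (by omega : k ≠ 0)]
        · gcongr
          exact_mod_cast hd

theorem statement17_general (k : ℕ) (hk : 2 ≤ k) (q a : ℕ) (hq : 0 < q) :
    Tendsto (fun X : ℝ =>
        (Nat.card {n : ℕ | 0 < n ∧ (n : ℝ) ≤ X ∧
          (∀ p : ℕ, p.Prime → ¬ p ^ k ∣ n) ∧ n ≡ a [MOD q]} : ℝ) / X)
      atTop (nhds (eta k q a)) := by
  simp_rw [card_kFree_eq_tsum_moebius (by omega : k ≠ 0), ← tsum_div_const]
  rw [eta, tsum_pnat_eq_tsum_of_eq_zero (f := fun d => if Nat.gcd q (d ^ k) ∣ a then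
    (μ d : ℝ) / (Nat.lcm q (d ^ k) : ℝ) else 0) (by simp)]
  refine tendsto_tsum_of_dominated_convergence
    (Real.summable_one_div_nat_pow.2 one_lt_two) (fun d => ?_) ?_
  · rcases eq_or_ne d 0 with rfl | hd
    · simp
    convert (Nat.tendsto_card_filter_dvd_modEq_div hq.ne' (pow_ne_zero k hd) a).const_mul
      (μ d : ℝ) using 2
    · rw [mul_div_assoc]
    · split_ifs <;> simp [div_eq_mul_inv]
  · filter_upwards [eventually_gt_atTop 0] with X hX d
    exact norm_moebius_mul_card_filter_pow_dvd_div_le hk hX d _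

/-- The `k`-free numbers `n ≤ X` in the class `a mod q` have asymptotic density `η(q,a)`. -/
theorem statement17 (k : ℕ) (hk : 2 ≤ k) (q a : ℕ) (hq : 0 < q) (ha : 0 < a) :
    Tendsto (fun X : ℝ =>
        (Nat.card {n : ℕ | 0 < n ∧ (n : ℝ) ≤ X ∧
          (∀ p : ℕ, p.Prime → ¬ p ^ k ∣ n) ∧ n ≡ a [MOD q]} : ℝ) / X)
      atTop (nhds (eta k q a)) :=
  statement17_general k hk q a hq
end
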